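/- Let 𝔥 = ⊕_{i∈I} 𝔥^i with each 𝔥^i non-empty and indecomposable. Then the map φ: Aut*(𝔥) → 𝒜(𝔥) sending ψ to the family (ψ|_{𝔥^i})_{i∈I} is a bijection, where 𝒜(𝔥) is the set of families (ψ^i)_{i∈I} ∈ ∏_i Aut*(𝔥^i) agreeing on common fat vertices of distinct addends. -/

import Mathlib

/-- A Hoffman graph: a finite simple graph with vertices labeled slim or fat,
fat vertices pairwise non-adjacent, each fat vertex with a slim neighbor. -/
structure HoffmanGraph (V : Type) where
  adj : V → V → Prop
  symm : Symmetric adj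
  irrefl : Irreflexive adj
  slim : V → Prop
  fat_slim_nbr : ∀ x, ¬ slim x → ∃ y, slim y ∧ adj x y
  fat_not_adj : ∀ x y, ¬ slim x → ¬ slim y → ¬ adj x y

namespace HoffmanGraph

variable {V W U : Type}

def slimSet (H : HoffmanGraph V) : Set V := {x | H.slim x}

def toSimple (H : HoffmanGraph V) : SimpleGraph V where
  Adj := H.adj
  symm := by constructor; intro a b h; exact H.symm h
  loopless := by constructor; intro a; exact H.irrefl a

/-- common fat neighbours of `x` and `y` within the carrier set `S`. -/
def fatCommonOn (H : HoffmanGraph V) (S : Set V) (x y : V) : Set V :=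
  {z | z ∈ S ∧ ¬ H.slim z ∧ H.adj x z ∧ H.adj y z}

/-- The induced Hoffman subgraph of `H` on `S` is the sum of the induced subgraphs
on the sets `P i`. -/
def IsSumOn (H : HoffmanGraph V) (S : Set V) {ι : Type} (P : ι → Set V) : Prop :=
  (∀ i, P i ⊆ S) ∧
  (⋃ i, P i) = S ∧
  (∀ x ∈ S, H.slim x → ∃! i, x ∈ P i) ∧
  (∀ i, ∀ x ∈ P i, H.slim x → ∀ z ∈ S, ¬ H.slim z → H.adj x z → z ∈ P i) ∧
  (∀ i, ∀ z ∈ P i, ¬ H.slim z → ∃ x ∈ P i, H.slim x ∧ H.adj z x) ∧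
  (∀ i j, i ≠ j → ∀ x ∈ P i, ∀ y ∈ P j, H.slim x → H.slim y →
    (H.fatCommonOn S x y).ncard ≤ 1 ∧ ((H.fatCommonOn S x y).ncard = 1 ↔ H.adj x y))

/-- Binary sum. -/
def IsSumOn2 (H : HoffmanGraph V) (S A B : Set V) : Prop :=
  H.IsSumOn S (fun b : Bool => if b then A else B)

/-- The induced Hoffman subgraph on `S` is non-empty and not a sum of two non-empty
Hoffman subgraphs. -/
def Indecomposable (H : HoffmanGraph V) (S : Set V) : Prop :=
  S.Nonempty ∧ ∀ A B : Set V, A.Nonempty → B.Nonempty → ¬ H.IsSumOn2 S A B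

/-- `⟪X⟫`: `X` together with the fat neighbours (inside the carrier `S`) of its members. -/
def hind (H : HoffmanGraph V) (S X : Set V) : Set V :=
  X ∪ {z | z ∈ S ∧ ¬ H.slim z ∧ ∃ x ∈ X, H.adj x z}

/-- `e` is an isomorphism of Hoffman graphs. -/
def IsIso (H : HoffmanGraph V) (K : HoffmanGraph W) (e : V ≃ W) : Prop :=
  (∀ x y, H.adj x y ↔ K.adj (e x) (e y)) ∧ ∀ x, (H.slim x ↔ K.slim (e x))

/-- `K` is isomorphic to the induced Hoffman subgraph of `L` on `S`. -/
def IsoToInduced (K : HoffmanGraph W) (L : HoffmanGraph U) (S : Set U) : Prop :=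
  ∃ e : W ≃ S, (∀ x y, K.adj x y ↔ L.adj (e x).1 (e y).1) ∧ ∀ x, (K.slim x ↔ L.slim (e x).1)

/-- `K` is isomorphic to an induced Hoffman subgraph of `L`. -/
def IsSubgraphOf (K : HoffmanGraph W) (L : HoffmanGraph U) : Prop :=
  ∃ S : Set U, IsoToInduced K L S

/-- The induced Hoffman subgraph on `S` is (isomorphic to) `𝔥₂`:
one slim vertex adjacent to two fat vertices. -/
def IsH2On (H : HoffmanGraph V) (S : Set V) : Prop :=
  ∃ s f₁ f₂ : V, f₁ ≠ f₂ ∧ S = {s, f₁, f₂} ∧ H.slim s ∧ ¬ H.slim f₁ ∧ ¬ H.slim f₂ ∧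
    H.adj s f₁ ∧ H.adj s f₂

/-- The induced Hoffman subgraph on `S` belongs to the family `𝔒`: it is `𝔥₂` or an
indecomposable fat Hoffman graph with at least 2 slim vertices and exactly one fat vertex. -/
def MemO (H : HoffmanGraph V) (S : Set V) : Prop :=
  H.IsH2On S ∨
  (H.Indecomposable S ∧ 2 ≤ (S ∩ H.slimSet).ncard ∧
    ∃ w ∈ S, ¬ H.slim w ∧ (∀ z ∈ S, ¬ H.slim z → z = w) ∧ ∀ x ∈ S, H.slim x → H.adj x w)

/-- The induced Hoffman subgraph of `L` on `S` is isomorphic to a member of the family `ℋ`. -/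
def MemFam (ℋ : ∀ W : Type, HoffmanGraph W → Prop) (L : HoffmanGraph U) (S : Set U) : Prop :=
  ∃ (W : Type) (K : HoffmanGraph W), ℋ W K ∧ IsoToInduced K L S

/-- `K` is a sum of members of `ℋ`. -/
def IsCoverGraph (ℋ : ∀ W : Type, HoffmanGraph W → Prop) (K : HoffmanGraph U) : Prop :=
  ∃ (n : ℕ) (P : Fin n → Set U), K.IsSumOn Set.univ P ∧ ∀ i, MemFam ℋ K (P i)

/-- `G` is a slim `ℋ`-line graph. -/
def IsSlimLine (ℋ : ∀ W : Type, HoffmanGraph W → Prop) {V : Type} (G : SimpleGraph V) : Prop :=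
  ∃ (U : Type) (K : HoffmanGraph U) (ι : V → U), Finite U ∧ Function.Injective ι ∧
    (∀ a, K.slim (ι a)) ∧ (∀ a b, G.Adj a b ↔ K.adj (ι a) (ι b)) ∧ IsCoverGraph ℋ K

/-- `K` (with slim vertices identified with `V(G)` via `ι`) is a strict `ℋ`-cover of `G`. -/
def IsStrictCover (ℋ : ∀ W : Type, HoffmanGraph W → Prop) {V U : Type}
    (G : SimpleGraph V) (K : HoffmanGraph U) (ι : V → U) : Prop :=
  Finite U ∧ Function.Injective ι ∧ (∀ a b, G.Adj a b ↔ K.adj (ι a) (ι b)) ∧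
  (∀ u, K.slim u ↔ ∃ a, ι a = u) ∧ IsCoverGraph ℋ K

/-- Two strict covers are equivalent: an isomorphism restricting to the identity on `G`. -/
def EquivCovers {V U U' : Type} (K : HoffmanGraph U) (ι : V → U)
    (K' : HoffmanGraph U') (ι' : V → U') : Prop :=
  ∃ φ : U ≃ U', IsIso K K' φ ∧ ∀ a, φ (ι a) = ι' a

/-- The family `ℋ̄ = {𝔥₂} ∪ {𝔤 ∈ 𝔒 : 𝔤 is a Hoffman subgraph of a member of ℋ}`. -/
def BarFam (ℋ : ∀ W : Type, HoffmanGraph W → Prop) : ∀ W : Type, HoffmanGraph W → Prop :=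
  fun _ K => K.IsH2On Set.univ ∨
    (K.MemO Set.univ ∧ ∃ (U : Type) (L : HoffmanGraph U), ℋ U L ∧ IsSubgraphOf K L)

/-- `G` has a strict `ℱ`-cover and it is unique up to equivalence. -/
def UniqueStrictCover (ℱ : ∀ W : Type, HoffmanGraph W → Prop) {V : Type}
    (G : SimpleGraph V) : Prop :=
  (∃ (U : Type) (K : HoffmanGraph U) (ι : V → U), IsStrictCover ℱ G K ι) ∧
  ∀ (U U' : Type) (K : HoffmanGraph U) (K' : HoffmanGraph U') (ι : V → U) (ι' : V → U'),
    IsStrictCover ℱ G K ι → IsStrictCover ℱ G K' ι' → EquivCovers K ι K' ι'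

end HoffmanGraph
namespace HoffmanGraph

variable {V : Type}

/-- `Aut*(𝔥)`: automorphisms of `𝔥` fixing every slim vertex. -/
def AutStarFull (H : HoffmanGraph V) : Type :=
  {ψ : V ≃ V // IsIso H H ψ ∧ ∀ x, H.slim x → ψ x = x}

/-- `Aut*` of the induced Hoffman subgraph on `S`. -/
def AutStarOn (H : HoffmanGraph V) (S : Set V) : Type :=
  {f : S ≃ S // (∀ x y : S, H.adj x.1 y.1 ↔ H.adj (f x).1 (f y).1) ∧
    (∀ x : S, (H.slim x.1 ↔ H.slim (f x).1)) ∧ ∀ x : S, H.slim x.1 → (f x).1 = x.1}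

/-- `𝒜(𝔥)`: families of addend automorphisms agreeing on common fat vertices. -/
def FamA (H : HoffmanGraph V) {ι : Type} (P : ι → Set V) : Type :=
  {g : ∀ i, AutStarOn H (P i) //
    ∀ i j, i ≠ j → ∀ (x : V) (hi : x ∈ P i) (hj : x ∈ P j),
      ((g i).1 ⟨x, hi⟩).1 = ((g j).1 ⟨x, hj⟩).1}

end HoffmanGraph

section Stmt11Aux
open HoffmanGraph

variable {V : Type} [Fintype V] {H : HoffmanGraph V} {ι : Type} {P : ι → Set V}

theorem exists_mem_stmt11 (hcov : (⋃ i, P i) = Set.univ) (x : V) : ∃ i, x ∈ P i := by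
  have : x ∈ ⋃ i, P i := hcov ▸ Set.mem_univ x
  simpa using this

theorem restrict_mem_stmt11 (hcov : (⋃ i, P i) = Set.univ)
    (hclos : ∀ i, ∀ x ∈ P i, H.slim x → ∀ z ∈ (Set.univ : Set V),
      ¬ H.slim z → H.adj x z → z ∈ P i)
    (hfat : ∀ i, ∀ z ∈ P i, ¬ H.slim z → ∃ x ∈ P i, H.slim x ∧ H.adj z x)
    (ψ : AutStarFull H) {i : ι} {x : V} (hx : x ∈ P i) : ψ.1 x ∈ P i := by
  by_cases hs : H.slim x
  · rw [ψ.2.2 x hs]; exact hx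
  · obtain ⟨y, hy, hys, hadj⟩ := hfat i x hx hs
    have h1 : ¬ H.slim (ψ.1 x) := fun h => hs ((ψ.2.1.2 x).mpr h)
    have h2 : H.adj y (ψ.1 x) := by
      have h3 := (ψ.2.1.1 x y).mp hadj
      rw [ψ.2.2 y hys] at h3
      exact H.symm h3
    exact hclos i y hy hys (ψ.1 x) trivial h1 h2

noncomputable def restrictAutStmt11 (hcov : (⋃ i, P i) = Set.univ)
    (hclos : ∀ i, ∀ x ∈ P i, H.slim x → ∀ z ∈ (Set.univ : Set V),
      ¬ H.slim z → H.adj x z → z ∈ P i)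
    (hfat : ∀ i, ∀ z ∈ P i, ¬ H.slim z → ∃ x ∈ P i, H.slim x ∧ H.adj z x)
    (ψ : AutStarFull H) (i : ι) : AutStarOn H (P i) :=
  ⟨Equiv.ofBijective (fun x => ⟨ψ.1 x.1, restrict_mem_stmt11 hcov hclos hfat ψ x.2⟩)
    (Finite.injective_iff_bijective.mp
      (fun a b hab => Subtype.ext (ψ.1.injective (congrArg Subtype.val hab)))),
   fun x y => ψ.2.1.1 x.1 y.1, fun x => ψ.2.1.2 x.1, fun x hx => ψ.2.2 x.1 hx⟩

theorem val_eq_stmt11 (g : FamA H P) {i j : ι} {x : V} (hi : x ∈ P i) (hj : x ∈ P j) :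
    ((g.1 i).1 ⟨x, hi⟩).1 = ((g.1 j).1 ⟨x, hj⟩).1 := by
  rcases eq_or_ne i j with rfl | hne
  · rfl
  · exact g.2 i j hne x hi hj

theorem shared_surj_stmt11 (g : FamA H P) {i j : ι} {x : V}
    (hi : x ∈ P i) (hj : x ∈ P j) :
    ∃ (y : V) (hyi : y ∈ P i) (hyj : y ∈ P j), ((g.1 i).1 ⟨y, hyi⟩).1 = x := by
  have hmem : ∀ (z : V) (hzi : z ∈ P i), z ∈ P j →
      ((g.1 i).1 ⟨z, hzi⟩).1 ∈ P i ∩ P j := by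
    intro z hzi hzj
    refine ⟨((g.1 i).1 ⟨z, hzi⟩).2, ?_⟩
    rw [val_eq_stmt11 g hzi hzj]
    exact ((g.1 j).1 ⟨z, hzj⟩).2
  let f : (P i ∩ P j : Set V) → (P i ∩ P j : Set V) := fun z =>
    ⟨((g.1 i).1 ⟨z.1, z.2.1⟩).1, hmem z.1 z.2.1 z.2.2⟩
  have hinj : Function.Injective f := by
    intro a b hab
    have hab' : (f a).1 = (f b).1 := congrArg Subtype.val hab
    have h1 : (⟨a.1, a.2.1⟩ : (P i : Set V)) = ⟨b.1, b.2.1⟩ :=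
      (g.1 i).1.injective (Subtype.ext hab')
    exact Subtype.ext (congrArg (fun t : (P i : Set V) => t.1) h1)
  obtain ⟨y, hy⟩ := Finite.injective_iff_surjective.mp hinj ⟨x, hi, hj⟩
  exact ⟨y.1, y.2.1, y.2.2, congrArg Subtype.val hy⟩

theorem inv_val_eq_stmt11 (g : FamA H P) {i j : ι} {x : V}
    (hi : x ∈ P i) (hj : x ∈ P j) :
    ((g.1 i).1.symm ⟨x, hi⟩).1 = ((g.1 j).1.symm ⟨x, hj⟩).1 := by
  obtain ⟨y, hyi, hyj, hy⟩ := shared_surj_stmt11 g hi hj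
  have h1 : (g.1 i).1.symm ⟨x, hi⟩ = ⟨y, hyi⟩ :=
    (g.1 i).1.symm_apply_eq.mpr (Subtype.ext hy.symm)
  have hyx : ((g.1 j).1 ⟨y, hyj⟩).1 = x := by rw [← val_eq_stmt11 g hyi hyj]; exact hy
  have h2 : (g.1 j).1.symm ⟨x, hj⟩ = ⟨y, hyj⟩ :=
    (g.1 j).1.symm_apply_eq.mpr (Subtype.ext hyx.symm)
  rw [h1, h2]

noncomputable def glueFunStmt11 (hcov : (⋃ i, P i) = Set.univ) (g : FamA H P) (x : V) : V :=
  ((g.1 (exists_mem_stmt11 hcov x).choose).1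
    ⟨x, (exists_mem_stmt11 hcov x).choose_spec⟩).1

noncomputable def glueInvStmt11 (hcov : (⋃ i, P i) = Set.univ) (g : FamA H P) (x : V) : V :=
  ((g.1 (exists_mem_stmt11 hcov x).choose).1.symm
    ⟨x, (exists_mem_stmt11 hcov x).choose_spec⟩).1

theorem glueFun_eq_stmt11 (hcov : (⋃ i, P i) = Set.univ) (g : FamA H P) {i : ι} {x : V}
    (hx : x ∈ P i) : glueFunStmt11 hcov g x = ((g.1 i).1 ⟨x, hx⟩).1 :=
  val_eq_stmt11 g _ hx

theorem glueInv_eq_stmt11 (hcov : (⋃ i, P i) = Set.univ) (g : FamA H P) {i : ι} {x : V}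
    (hx : x ∈ P i) : glueInvStmt11 hcov g x = ((g.1 i).1.symm ⟨x, hx⟩).1 :=
  inv_val_eq_stmt11 g _ hx

theorem glue_left_stmt11 (hcov : (⋃ i, P i) = Set.univ) (g : FamA H P) (x : V) :
    glueInvStmt11 hcov g (glueFunStmt11 hcov g x) = x := by
  have hx : x ∈ P (exists_mem_stmt11 hcov x).choose := (exists_mem_stmt11 hcov x).choose_spec
  set i := (exists_mem_stmt11 hcov x).choose with hidef
  have h1 : glueFunStmt11 hcov g x = ((g.1 i).1 ⟨x, hx⟩).1 := rfl
  have hmem : glueFunStmt11 hcov g x ∈ P i := h1 ▸ ((g.1 i).1 ⟨x, hx⟩).2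
  rw [glueInv_eq_stmt11 hcov g hmem]
  have h2 : (⟨glueFunStmt11 hcov g x, hmem⟩ : P i) = (g.1 i).1 ⟨x, hx⟩ := Subtype.ext h1
  rw [h2, Equiv.symm_apply_apply]

theorem glue_right_stmt11 (hcov : (⋃ i, P i) = Set.univ) (g : FamA H P) (x : V) :
    glueFunStmt11 hcov g (glueInvStmt11 hcov g x) = x := by
  have hx : x ∈ P (exists_mem_stmt11 hcov x).choose := (exists_mem_stmt11 hcov x).choose_spec
  set i := (exists_mem_stmt11 hcov x).choose with hidef
  have h1 : glueInvStmt11 hcov g x = ((g.1 i).1.symm ⟨x, hx⟩).1 := rfl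
  have hmem : glueInvStmt11 hcov g x ∈ P i := h1 ▸ ((g.1 i).1.symm ⟨x, hx⟩).2
  rw [glueFun_eq_stmt11 hcov g hmem]
  have h2 : (⟨glueInvStmt11 hcov g x, hmem⟩ : P i) = (g.1 i).1.symm ⟨x, hx⟩ := Subtype.ext h1
  rw [h2, Equiv.apply_symm_apply]

theorem glue_slim_stmt11 (hcov : (⋃ i, P i) = Set.univ) (g : FamA H P) (x : V)
    (hs : H.slim x) : glueFunStmt11 hcov g x = x :=
  (g.1 (exists_mem_stmt11 hcov x).choose).2.2.2
    ⟨x, (exists_mem_stmt11 hcov x).choose_spec⟩ hs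

theorem glue_slimIff_stmt11 (hcov : (⋃ i, P i) = Set.univ) (g : FamA H P) (x : V) :
    H.slim x ↔ H.slim (glueFunStmt11 hcov g x) :=
  (g.1 (exists_mem_stmt11 hcov x).choose).2.2.1
    ⟨x, (exists_mem_stmt11 hcov x).choose_spec⟩

theorem glue_not_adj_stmt11 (hcov : (⋃ i, P i) = Set.univ)
    (hclos : ∀ i, ∀ x ∈ P i, H.slim x → ∀ z ∈ (Set.univ : Set V),
      ¬ H.slim z → H.adj x z → z ∈ P i)
    (g : FamA H P) {x y : V} {i : ι} (hx : x ∈ P i) (hsx : H.slim x)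
    (hsy : ¬ H.slim y) (hnc : y ∉ P i) : ¬ H.adj x (glueFunStmt11 hcov g y) := by
  intro h
  obtain ⟨j, hy⟩ := exists_mem_stmt11 hcov y
  have hb : glueFunStmt11 hcov g y = ((g.1 j).1 ⟨y, hy⟩).1 := glueFun_eq_stmt11 hcov g hy
  have hfatb : ¬ H.slim (glueFunStmt11 hcov g y) := fun hs =>
    hsy ((glue_slimIff_stmt11 hcov g y).mpr hs)
  have hbi : glueFunStmt11 hcov g y ∈ P i := hclos i x hx hsx _ trivial hfatb h
  have hbj : glueFunStmt11 hcov g y ∈ P j := hb ▸ ((g.1 j).1 ⟨y, hy⟩).2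
  obtain ⟨y', hy'j, hy'i, hgy'⟩ := shared_surj_stmt11 g hbj hbi
  have h1 : ((g.1 j).1 ⟨y', hy'j⟩ : P j) = (g.1 j).1 ⟨y, hy⟩ := Subtype.ext (hgy'.trans hb)
  have h2 : y' = y := congrArg Subtype.val ((g.1 j).1.injective h1)
  exact hnc (h2 ▸ hy'i)

theorem glue_adj_stmt11 (hcov : (⋃ i, P i) = Set.univ)
    (hclos : ∀ i, ∀ x ∈ P i, H.slim x → ∀ z ∈ (Set.univ : Set V),
      ¬ H.slim z → H.adj x z → z ∈ P i)
    (g : FamA H P) (x y : V) :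
    H.adj x y ↔ H.adj (glueFunStmt11 hcov g x) (glueFunStmt11 hcov g y) := by
  by_cases hc : ∃ k, x ∈ P k ∧ y ∈ P k
  · obtain ⟨k, hx, hy⟩ := hc
    rw [glueFun_eq_stmt11 hcov g hx, glueFun_eq_stmt11 hcov g hy]
    exact (g.1 k).2.1 ⟨x, hx⟩ ⟨y, hy⟩
  · push_neg at hc
    obtain ⟨i, hx⟩ := exists_mem_stmt11 hcov x
    obtain ⟨j, hy⟩ := exists_mem_stmt11 hcov y
    have hnyi : y ∉ P i := hc i hx
    have hnxj : x ∉ P j := fun hxj => hc j hxj hy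
    by_cases hsx : H.slim x <;> by_cases hsy : H.slim y
    · rw [glue_slim_stmt11 hcov g x hsx, glue_slim_stmt11 hcov g y hsy]
    · refine iff_of_false (fun h => hnyi (hclos i x hx hsx y trivial hsy h)) ?_
      rw [glue_slim_stmt11 hcov g x hsx]
      exact glue_not_adj_stmt11 hcov hclos g hx hsx hsy hnyi
    · refine iff_of_false
        (fun h => hnxj (hclos j y hy hsy x trivial hsx (H.symm h))) ?_
      rw [glue_slim_stmt11 hcov g y hsy]
      intro h
      exact glue_not_adj_stmt11 hcov hclos g hy hsy hsx hnxj (H.symm h)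
    · refine iff_of_false (H.fat_not_adj x y hsx hsy) (H.fat_not_adj _ _ ?_ ?_)
      · exact fun hs => hsx ((glue_slimIff_stmt11 hcov g x).mpr hs)
      · exact fun hs => hsy ((glue_slimIff_stmt11 hcov g y).mpr hs)

noncomputable def glueAutStmt11 (hcov : (⋃ i, P i) = Set.univ)
    (hclos : ∀ i, ∀ x ∈ P i, H.slim x → ∀ z ∈ (Set.univ : Set V),
      ¬ H.slim z → H.adj x z → z ∈ P i)
    (g : FamA H P) : AutStarFull H :=
  ⟨⟨glueFunStmt11 hcov g, glueInvStmt11 hcov g, glue_left_stmt11 hcov g,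
    glue_right_stmt11 hcov g⟩,
   ⟨fun x y => glue_adj_stmt11 hcov hclos g x y, fun x => glue_slimIff_stmt11 hcov g x⟩,
   fun x hs => glue_slim_stmt11 hcov g x hs⟩

end Stmt11Aux

open HoffmanGraph in
/-- `Aut*(𝔥)` is in bijection with `𝒜(𝔥)` via restriction to the addends. -/
theorem stmt11 {V : Type} [Fintype V] (H : HoffmanGraph V) {ι : Type} (P : ι → Set V)
    (hsum : H.IsSumOn Set.univ P) (hind : ∀ i, H.Indecomposable (P i)) :
    ∃ Φ : AutStarFull H ≃ FamA H P,
      ∀ (ψ : AutStarFull H) (i : ι) (x : V) (hx : x ∈ P i),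
        (((Φ ψ).1 i).1 ⟨x, hx⟩).1 = ψ.1 x := by
  obtain ⟨hsub, hcov, huniq, hclos, hfat, hcard⟩ := hsum
  refine ⟨⟨fun ψ => ⟨fun i => restrictAutStmt11 hcov hclos hfat ψ i,
      fun i j hne x hi hj => rfl⟩,
    fun g => glueAutStmt11 hcov hclos g, ?_, ?_⟩, fun ψ i x hx => rfl⟩
  · intro ψ
    apply Subtype.ext
    apply Equiv.ext
    intro x
    exact glueFun_eq_stmt11 hcov _ (exists_mem_stmt11 hcov x).choose_spec
  · intro g
    apply Subtype.ext
    funext i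
    apply Subtype.ext
    apply Equiv.ext
    intro x
    apply Subtype.ext
    show glueFunStmt11 hcov g x.1 = _
    rw [glueFun_eq_stmt11 hcov g x.2]
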